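/- Let n ≥ 2, let k_1,…,k_n be integers with each k_i ≥ 3 such that there exist distinct indices a, b ∈ {1,…,n} with k_a = k_b = 4, let G be the disjoint union of the cycles C_{k_1},…,C_{k_n}, and let M = K_1 ∨ G. Then P_DP(M,4) < P(M,4). Consequently, τ_DP(M) ≥ 5. -/

import Mathlib

/-!
Take the 4-fold cover of `K_1 ∨ G` whose matchings are the identity on every edge except on the
edge `01` of two 4-cycles, where they are the transpositions `(0 1)` and `(2 3)`. Once the apex
has colour `c`, each cycle is coloured independently from the other three colours: an untwisted
`C_4` has `18` such colourings, the two twisted ones have `20` and `16` (in some order), and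
`20 · 16 < 18 · 18`. Summing over `c` gives `P_DP(M,4) < P(M,4)`, which rules out every threshold
`N ≤ 4`.
-/

open SimpleGraph Finset

/-- A (standardized) `m`-fold cover of a graph `G`: the vertex set of the cover graph `H`
is `V × Fin m`, where the fiber (list) of a vertex `v` is `L v = {v} × Fin m`.
Every `m`-fold cover in the sense of Dvořák–Postle is isomorphic to one of this form. -/
structure DPCover {V : Type} (G : SimpleGraph V) (m : ℕ) where
  /-- the cover graph -/
  H : SimpleGraph (V × Fin m)
  /-- each fiber induces a complete graph -/
  fiber_complete : ∀ (v : V) (i j : Fin m), i ≠ j → H.Adj (v, i) (v, j)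
  /-- cross-edges only join fibers of adjacent vertices -/
  cross : ∀ (u v : V) (i j : Fin m), H.Adj (u, i) (v, j) → u = v ∨ G.Adj u v
  /-- the cross-edges between the fibers of two adjacent vertices form a matching -/
  matching : ∀ (u v : V), G.Adj u v → ∀ (i j j' : Fin m),
      H.Adj (u, i) (v, j) → H.Adj (u, i) (v, j') → j = j'

/-- `f` encodes an `(L,H)`-coloring of `G`, i.e. the set `{(v, f v) : v ∈ V}` is independent
in the cover graph. -/
def DPCover.IsColoring {V : Type} {G : SimpleGraph V} {m : ℕ} (C : DPCover G m)
    (f : V → Fin m) : Prop :=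
  ∀ u v : V, ¬ C.H.Adj (u, f u) (v, f v)

/-- `P_DP(G, (L,H))`: the number of `(L,H)`-colorings of `G`. -/
noncomputable def DPCover.count {V : Type} [Fintype V] {G : SimpleGraph V} {m : ℕ}
    (C : DPCover G m) : ℕ :=
  Nat.card { f : V → Fin m // C.IsColoring f }

/-- `N((v,j), (L,H))`: the number of `(L,H)`-colorings of `G` containing the vertex `(v, j)`. -/
noncomputable def DPCover.countAt {V : Type} [Fintype V] {G : SimpleGraph V} {m : ℕ}
    (C : DPCover G m) (v : V) (j : Fin m) : ℕ :=
  Nat.card { f : V → Fin m // C.IsColoring f ∧ f v = j }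

/-- The DP color function `P_DP(G, m)`. -/
noncomputable def PDP {V : Type} [Fintype V] (G : SimpleGraph V) (m : ℕ) : ℕ :=
  sInf { n : ℕ | ∃ C : DPCover G m, n = C.count }

/-- The chromatic polynomial `P(G, m)`: the number of proper colorings with colors in `Fin m`. -/
noncomputable def chromPoly {V : Type} [Fintype V] (G : SimpleGraph V) (m : ℕ) : ℕ :=
  Nat.card { f : V → Fin m // ∀ u v : V, G.Adj u v → f u ≠ f v }

/-- The DP color function threshold `τ_DP(G)`: the least `N ≥ χ(G)` such that
`P_DP(G,m) = P(G,m)` for all `m ≥ N` (and `∞` if there is no such `N`). -/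
noncomputable def tauDP {V : Type} [Fintype V] (G : SimpleGraph V) : ℕ∞ :=
  sInf { N : ℕ∞ | ∃ n : ℕ, N = (n : ℕ∞) ∧ G.chromaticNumber ≤ (n : ℕ∞) ∧
      ∀ m : ℕ, n ≤ m → PDP G m = chromPoly G m }

/-- The join `G ∨ K` of two vertex-disjoint graphs. -/
def joinG {α β : Type} (G : SimpleGraph α) (K : SimpleGraph β) : SimpleGraph (α ⊕ β) where
  Adj x y := match x, y with
    | Sum.inl a, Sum.inl a' => G.Adj a a'
    | Sum.inr b, Sum.inr b' => K.Adj b b'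
    | Sum.inl _, Sum.inr _ => True
    | Sum.inr _, Sum.inl _ => True
  symm := by
    constructor
    rintro (a | b) (a' | b') h
    · exact h.symm
    · trivial
    · trivial
    · exact h.symm
  loopless := by
    constructor
    rintro (a | b) h
    · exact G.loopless.irrefl a h
    · exact K.loopless.irrefl b h

/-- The vertex-gluing of graphs `G i` at the vertices `u i`: identify all the `u i` into a
single vertex (represented by `none`). -/
def VGlue {n : ℕ} {V : Fin n → Type} (G : ∀ i, SimpleGraph (V i)) (u : ∀ i, V i) :
    SimpleGraph (Option (Σ i : Fin n, {x : V i // x ≠ u i})) where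
  Adj a b := match a, b with
    | none, none => False
    | none, some ⟨i, x⟩ => (G i).Adj (u i) x.val
    | some ⟨i, x⟩, none => (G i).Adj x.val (u i)
    | some ⟨i, x⟩, some ⟨j, y⟩ => ∃ h : i = j, (G j).Adj (cast (congrArg V h) x.val) y.val
  symm := by
    constructor
    rintro (_ | ⟨i, x⟩) (_ | ⟨j, y⟩) h
    · exact h.elim
    · exact h.symm
    · exact h.symm
    · obtain ⟨rfl, h⟩ := h
      exact ⟨rfl, h.symm⟩
  loopless := by
    constructor
    rintro (_ | ⟨i, x⟩) h
    · exact h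
    · obtain ⟨h', h⟩ := h
      exact (G i).loopless.irrefl x.val h

/-- The `K_p`-gluing of graphs `G i`, each with a chosen `p`-clique `U i 0, …, U i (p-1)`:
the cliques are identified coordinatewise (the glued clique is `Sum.inl (Fin p)`). -/
def KGlue {n p : ℕ} {V : Fin n → Type} (G : ∀ i, SimpleGraph (V i))
    (U : ∀ i, Fin p → V i) :
    SimpleGraph ((Fin p) ⊕ (Σ i : Fin n, {x : V i // ∀ q, x ≠ U i q})) where
  Adj a b := match a, b with
    | Sum.inl q, Sum.inl q' => q ≠ q'
    | Sum.inl q, Sum.inr ⟨i, x⟩ => (G i).Adj (U i q) x.val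
    | Sum.inr ⟨i, x⟩, Sum.inl q => (G i).Adj x.val (U i q)
    | Sum.inr ⟨i, x⟩, Sum.inr ⟨j, y⟩ => ∃ h : i = j, (G j).Adj (cast (congrArg V h) x.val) y.val
  symm := by
    constructor
    rintro (q | ⟨i, x⟩) (q' | ⟨j, y⟩) h
    · exact h.symm
    · exact h.symm
    · exact h.symm
    · obtain ⟨rfl, h⟩ := h
      exact ⟨rfl, h.symm⟩
  loopless := by
    constructor
    rintro (q | ⟨i, x⟩) h
    · exact h rfl
    · obtain ⟨h', h⟩ := h
      exact (G i).loopless.irrefl x.val h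

/-- The disjoint union of a family of graphs. -/
def sigmaG {n : ℕ} {V : Fin n → Type} (G : ∀ i, SimpleGraph (V i)) :
    SimpleGraph (Σ i : Fin n, V i) where
  Adj a b := ∃ h : a.1 = b.1, (G b.1).Adj (cast (congrArg V h) a.2) b.2
  symm := by
    constructor
    rintro ⟨i, x⟩ ⟨j, y⟩ ⟨h1, h2⟩
    dsimp only at h1 h2 ⊢
    subst h1
    exact ⟨rfl, h2.symm⟩
  loopless := by
    constructor
    rintro ⟨i, x⟩ ⟨h1, h2⟩
    dsimp only at h2
    exact (G i).loopless.irrefl x h2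

/-- chordal: every cycle of length at least `4` has a chord, i.e. an edge of the graph
joining two vertices of the cycle that is not an edge of the cycle. -/
def IsChordal {V : Type} (G : SimpleGraph V) : Prop :=
  ∀ (v : V) (w : G.Walk v v), w.IsCycle → 4 ≤ w.length →
    ∃ x y, x ∈ w.support ∧ y ∈ w.support ∧ G.Adj x y ∧ s(x, y) ∉ w.edges


/-- The cone (join with `K_1`) of the disjoint union of the cycles `C_{k i}`. -/
def coneCycles {n : ℕ} (k : Fin n → ℕ) :
    SimpleGraph (Fin 1 ⊕ Σ i : Fin n, Fin (k i)) :=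
  joinG (⊤ : SimpleGraph (Fin 1)) (sigmaG fun i => SimpleGraph.cycleGraph (k i))

open Equiv

section Twist

variable {V : Type} {m : ℕ}

def IsTwistedColoring (G : SimpleGraph V) (σ : V → V → Perm (Fin m)) (f : V → Fin m) : Prop :=
  ∀ u v, G.Adj u v → f v ≠ σ u v (f u)

noncomputable def twistedCountAvoiding (G : SimpleGraph V) (σ : V → V → Perm (Fin m)) (c : Fin m) :
    ℕ :=
  Nat.card {g : V → Fin m // (∀ x, g x ≠ c) ∧ IsTwistedColoring G σ g}

theorem chromPoly_eq_card_isTwistedColoring_one [Fintype V] (G : SimpleGraph V) (m : ℕ) :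
    chromPoly G m = Nat.card {f : V → Fin m // IsTwistedColoring G 1 f} := by
  refine Nat.card_congr (Equiv.subtypeEquivRight fun f => forall₃_congr fun u v _ => ?_)
  rw [Pi.one_apply, Pi.one_apply, Perm.one_apply, ne_comm]

theorem twistedCountAvoiding_one_pos [Finite V] {G : SimpleGraph V} {q : ℕ} (hG : G.Colorable q)
    (c : Fin (q + 1)) : 0 < twistedCountAvoiding G 1 c := by
  obtain ⟨col⟩ := hG
  refine Nat.card_pos_iff.mpr ⟨⟨⟨c.succAbove ∘ col, fun x => c.succAbove_ne _, ?_⟩⟩, inferInstance⟩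
  intro u v huv
  simpa using (col.valid huv).symm

end Twist

namespace DPCover

variable {V : Type} {G : SimpleGraph V} {m : ℕ}

def ofTwist (σ : V → V → Perm (Fin m)) (hσ : ∀ u v, σ v u = (σ u v)⁻¹) : DPCover G m where
  H :=
    { Adj := fun p q => (p.1 = q.1 ∧ p.2 ≠ q.2) ∨ (G.Adj p.1 q.1 ∧ q.2 = σ p.1 q.1 p.2)
      symm := by
        constructor
        rintro ⟨u, i⟩ ⟨v, j⟩ (⟨huv, hij⟩ | ⟨huv, hj⟩)
        · exact .inl ⟨huv.symm, hij.symm⟩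
        · exact .inr ⟨huv.symm, by
          simp only at hj ⊢
          rw [hj, hσ, Perm.coe_inv, symm_apply_apply]⟩
      loopless := by
        constructor
        rintro ⟨u, i⟩ (⟨-, hii⟩ | ⟨huu, -⟩)
        exacts [hii rfl, G.loopless.irrefl u huu] }
  fiber_complete _ _ _ hij := .inl ⟨rfl, hij⟩
  cross := by
    rintro u v i j (⟨huv, -⟩ | ⟨huv, -⟩)
    exacts [.inl huv, .inr huv]
  matching := by
    rintro u v huv i j j' (⟨huv', -⟩ | ⟨-, hj⟩) (⟨huv', -⟩ | ⟨-, hj'⟩)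
    all_goals first | exact hj.trans hj'.symm | exact absurd huv' (G.ne_of_adj huv)

theorem count_ofTwist [Fintype V] (σ : V → V → Perm (Fin m)) (hσ : ∀ u v, σ v u = (σ u v)⁻¹) :
    (ofTwist (G := G) σ hσ).count = Nat.card {f : V → Fin m // IsTwistedColoring G σ f} := by
  refine Nat.card_congr (Equiv.subtypeEquivRight fun f => ⟨fun hf u v huv heq => ?_, ?_⟩)
  · exact hf u v (.inr ⟨huv, heq⟩)
  · rintro hf u v (⟨rfl, hne⟩ | ⟨huv, heq⟩)
    exacts [hne rfl, hf u v huv heq]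

end DPCover

theorem PDP_le_count {V : Type} [Fintype V] {G : SimpleGraph V} {m : ℕ} (C : DPCover G m) :
    PDP G m ≤ C.count :=
  Nat.sInf_le ⟨C, rfl⟩

theorem le_tauDP_of_PDP_lt {V : Type} [Fintype V] {G : SimpleGraph V} {m : ℕ}
    (h : PDP G m < chromPoly G m) : ((m + 1 : ℕ) : ℕ∞) ≤ tauDP G := by
  refine le_sInf ?_
  rintro _ ⟨N, rfl, -, hN⟩
  by_contra! hlt
  exact h.ne (hN m (Nat.lt_succ_iff.mp (Nat.cast_lt.mp hlt)))

section Cone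

variable {n m : ℕ} {V : Fin n → Type}

def coneTwist (τ : ∀ i, V i → V i → Perm (Fin m)) :
    Fin 1 ⊕ (Σ i, V i) → Fin 1 ⊕ (Σ i, V i) → Perm (Fin m)
  | .inr ⟨i, x⟩, .inr ⟨j, y⟩ => if h : i = j then τ j (cast (congrArg V h) x) y else 1
  | _, _ => 1

variable (τ : ∀ i, V i → V i → Perm (Fin m))

@[simp] theorem coneTwist_inl_left (z : Fin 1) (w : Fin 1 ⊕ (Σ i, V i)) :
    coneTwist τ (.inl z) w = 1 := by
  rcases w with _ | _ <;> rfl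

@[simp] theorem coneTwist_inl_right (z : Fin 1) (w : Fin 1 ⊕ (Σ i, V i)) :
    coneTwist τ w (.inl z) = 1 := by
  rcases w with _ | ⟨_, _⟩ <;> rfl

@[simp] theorem coneTwist_inr_inr (i : Fin n) (x y : V i) :
    coneTwist τ (.inr ⟨i, x⟩) (.inr ⟨i, y⟩) = τ i x y := by
  simp [coneTwist]

theorem coneTwist_swap (hτ : ∀ i x y, τ i y x = (τ i x y)⁻¹) (u v : Fin 1 ⊕ (Σ i, V i)) :
    coneTwist τ v u = (coneTwist τ u v)⁻¹ := by
  rcases u with _ | ⟨i, x⟩ <;> rcases v with _ | ⟨j, y⟩ <;> try simp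
  by_cases hij : i = j
  · subst hij
    rw [coneTwist_inr_inr, coneTwist_inr_inr, hτ]
  · simp [coneTwist, hij, Ne.symm hij]

theorem coneTwist_one : coneTwist (fun i : Fin n => (1 : V i → V i → Perm (Fin m))) = 1 := by
  funext u v
  rcases u with _ | ⟨i, x⟩ <;> rcases v with _ | ⟨j, y⟩ <;> simp [coneTwist]

variable (G : ∀ i, SimpleGraph (V i))

def coneTwistedColoringEquiv :
    {f // IsTwistedColoring (joinG (⊤ : SimpleGraph (Fin 1)) (sigmaG G)) (coneTwist τ) f} ≃
      Σ c : Fin m, Π i, {g : V i → Fin m // (∀ x, g x ≠ c) ∧ IsTwistedColoring (G i) (τ i) g} where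
  toFun f := ⟨f.1 (.inl 0), fun i => ⟨fun x => f.1 (.inr ⟨i, x⟩),
    fun x hx => f.2 (.inl 0) (.inr ⟨i, x⟩) trivial (by simpa using hx),
    fun x y hxy => by simpa using f.2 (.inr ⟨i, x⟩) (.inr ⟨i, y⟩) ⟨rfl, hxy⟩⟩⟩
  invFun cg := ⟨Sum.elim (fun _ => cg.1) (fun p => (cg.2 p.1).1 p.2), by
    rintro (z | ⟨i, x⟩) (z' | ⟨j, y⟩) huv
    · exact absurd (Subsingleton.elim z z') huv
    · simpa [eq_comm] using (cg.2 j).2.1 y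
    · simpa [eq_comm] using (cg.2 i).2.1 x
    · obtain ⟨hij, hxy⟩ := huv
      simp only at hij
      subst hij
      simpa using (cg.2 i).2.2 x y hxy⟩
  left_inv f := by
    ext (z | _)
    · simp [Subsingleton.elim z 0]
    · rfl
  right_inv _ := rfl

theorem card_isTwistedColoring_cone [∀ i, Fintype (V i)] :
    Nat.card {f // IsTwistedColoring (joinG (⊤ : SimpleGraph (Fin 1)) (sigmaG G)) (coneTwist τ) f} =
      ∑ c : Fin m, ∏ i, twistedCountAvoiding (G i) (τ i) c := by
  rw [Nat.card_congr (coneTwistedColoringEquiv τ G), Nat.card_sigma]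
  simp only [Nat.card_pi, twistedCountAvoiding]

end Cone

theorem prod_lt_prod_of_mul_lt_of_eq_off {ι R : Type*} [Fintype ι] [DecidableEq ι]
    [CommSemiring R] [PartialOrder R] [IsStrictOrderedRing R] {f g : ι → R} {a b : ι} (hab : a ≠ b)
    (hpair : f a * f b < g a * g b) (hoff : ∀ i, i ≠ a → i ≠ b → f i = g i)
    (hpos : ∀ i, i ≠ a → i ≠ b → 0 < g i) :
    ∏ i, f i < ∏ i, g i := by
  have hb : b ∈ univ.erase a := mem_erase.2 ⟨hab.symm, mem_univ b⟩
  have hoff' : ∀ i ∈ (univ.erase a).erase b, i ≠ a ∧ i ≠ b := fun i hi => by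
    simp only [mem_erase] at hi
    exact ⟨hi.2.1, hi.1⟩
  rw [← mul_prod_erase univ f (mem_univ a), ← mul_prod_erase _ f hb,
    ← mul_prod_erase univ g (mem_univ a), ← mul_prod_erase _ g hb, ← mul_assoc, ← mul_assoc,
    prod_congr rfl fun i hi => hoff i (hoff' i hi).1 (hoff' i hi).2]
  exact mul_lt_mul_of_pos_right hpair (prod_pos fun i hi => hpos i (hoff' i hi).1 (hoff' i hi).2)

def edgeTwist {k m : ℕ} (s : Perm (Fin m)) (x y : Fin k) : Perm (Fin m) :=
  if x.val = 0 ∧ y.val = 1 then s else if x.val = 1 ∧ y.val = 0 then s⁻¹ else 1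

theorem edgeTwist_swap {k m : ℕ} (s : Perm (Fin m)) (x y : Fin k) :
    edgeTwist s y x = (edgeTwist s x y)⁻¹ := by
  unfold edgeTwist
  split_ifs <;> first | omega | simp

theorem twistedCountAvoiding_cycleGraph_four_one (c : Fin 4) :
    twistedCountAvoiding (cycleGraph 4) (1 : Fin 4 → Fin 4 → Perm (Fin 4)) c = 18 := by
  unfold twistedCountAvoiding IsTwistedColoring
  rw [Nat.card_eq_fintype_card]
  revert c
  decide

theorem twistedCountAvoiding_cycleGraph_four_swap_mul (c : Fin 4) :
    twistedCountAvoiding (cycleGraph 4) (edgeTwist (swap 0 1)) c *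
      twistedCountAvoiding (cycleGraph 4) (edgeTwist (swap 2 3)) c = 320 := by
  unfold twistedCountAvoiding IsTwistedColoring
  simp only [Nat.card_eq_fintype_card]
  revert c
  decide

section SwapCover

variable {n : ℕ} (k : Fin n → ℕ) (a b : Fin n)

def swapTwist (i : Fin n) : Fin (k i) → Fin (k i) → Perm (Fin 4) :=
  if i = a then edgeTwist (swap 0 1) else if i = b then edgeTwist (swap 2 3) else 1

def swapCover : DPCover (coneCycles k) 4 :=
  DPCover.ofTwist (coneTwist (swapTwist k a b)) <| coneTwist_swap _ fun i x y => by
    unfold swapTwist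
    split_ifs
    exacts [edgeTwist_swap _ x y, edgeTwist_swap _ x y, inv_one.symm]

theorem count_swapCover_lt (hk : ∀ i, 3 ≤ k i) (hab : a ≠ b) (hka : k a = 4) (hkb : k b = 4) :
    (swapCover k a b).count < chromPoly (coneCycles k) 4 := by
  rw [swapCover, DPCover.count_ofTwist, chromPoly_eq_card_isTwistedColoring_one, ← coneTwist_one,
    coneCycles, card_isTwistedColoring_cone, card_isTwistedColoring_cone]
  refine sum_lt_sum_of_nonempty univ_nonempty fun c _ => prod_lt_prod_of_mul_lt_of_eq_off hab ?_
    (fun i hia hib => by simp [swapTwist, hia, hib])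
    fun i _ _ => twistedCountAvoiding_one_pos
      (cycleGraph.tricoloring (k i) (Nat.le_of_succ_le (hk i))).colorable c
  simp only [swapTwist, if_pos, if_neg hab.symm]
  rw [hka, hkb, twistedCountAvoiding_cycleGraph_four_swap_mul,
    twistedCountAvoiding_cycleGraph_four_one]
  norm_num

end SwapCover

theorem stmt_19_general {n : ℕ} (k : Fin n → ℕ) (hk : ∀ i, 3 ≤ k i)
    (h4 : ∃ a b : Fin n, a ≠ b ∧ k a = 4 ∧ k b = 4) :
    PDP (coneCycles k) 4 < chromPoly (coneCycles k) 4 ∧ (5 : ℕ∞) ≤ tauDP (coneCycles k) := by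
  obtain ⟨a, b, hab, hka, hkb⟩ := h4
  have hlt : PDP (coneCycles k) 4 < chromPoly (coneCycles k) 4 :=
    (PDP_le_count _).trans_lt (count_swapCover_lt k a b hk hab hka hkb)
  exact ⟨hlt, le_tauDP_of_PDP_lt hlt⟩

theorem stmt_19 {n : ℕ} (hn : 2 ≤ n) (k : Fin n → ℕ) (hk : ∀ i, 3 ≤ k i)
    (h4 : ∃ a b : Fin n, a ≠ b ∧ k a = 4 ∧ k b = 4) :
    PDP (coneCycles k) 4 < chromPoly (coneCycles k) 4 ∧ (5 : ℕ∞) ≤ tauDP (coneCycles k) :=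
  stmt_19_general k hk h4
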